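/- Let Q be a rack and Λ an abelian group. The diagonal subcomplex of the Yang-Baxter cochain complex of c_Q with coefficients Λ is isomorphic, as a cochain complex, to the rack cochain complex of Q with coefficients Λ: under the identification of a diagonal matrix f with the map λ(x_1,...,x_n) = f[(x_1,...,x_n),(x_1,...,x_n)], the Yang-Baxter coboundary corresponds to the rack coboundary (δλ)(a_0,...,a_n) = Σ_{i=1}^n (−1)^i [λ(a_0,...,a_{i-1},a_{i+1},...,a_n) − λ(a_0^{a_i},...,a_{i-1}^{a_i},a_{i+1},...,a_n)]. -/

import Mathlib

/-! On the diagonal the two coboundaries agree term by term, the `i = 0` term of the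
Yang-Baxter coboundary vanishing because no entry precedes `x_0`. Off the diagonal only
injectivity of the right translations is needed: it lets one recover `x_i` from
`x_i ^ (x_{i+1} ⋯ x_n)` once the later entries are known. -/

open scoped Classical

variable {Q : Type*}

/-- A rack: every right translation is a bijection, and self-distributivity holds. -/
def IsRack (op : Q → Q → Q) : Prop :=
  (∀ y : Q, Function.Bijective fun x => op x y) ∧
    ∀ a b c : Q, op (op a b) c = op (op a c) (op b c)

/-- Behavioural equivalence: `x ≡ y` iff `a ∗ x = a ∗ y` for all `a`. -/
def behEq (op : Q → Q → Q) (x y : Q) : Prop := ∀ a : Q, op a x = op a y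

noncomputable section

variable {A : Type*} [CommRing A]

/-- The iterated action `x_i ^ (x_{i+1} ⋯ x_n)`. -/
def opChain (op : Q → Q → Q) {n : ℕ} (x : Fin (n + 1) → Q) (i : Fin (n + 1)) : Q :=
  ((List.finRange (n + 1)).filter fun j => i < j).foldl (fun a j => op a (x j)) (x i)

/-- The partial Yang-Baxter coboundary `d_i^n`. -/
def dpart (op : Q → Q → Q) {n : ℕ} (i : Fin (n + 1))
    (f : (Fin n → Q) → (Fin n → Q) → A) :
    (Fin (n + 1) → Q) → (Fin (n + 1) → Q) → A := fun x y =>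
  f (x ∘ i.succAbove) (y ∘ i.succAbove) *
      (if opChain op x i = opChain op y i then (1 : A) else 0) -
    f (fun j => if i.succAbove j < i then op (x (i.succAbove j)) (x i) else x (i.succAbove j))
      (fun j => if i.succAbove j < i then op (y (i.succAbove j)) (y i) else y (i.succAbove j)) *
      (if x i = y i then (1 : A) else 0)

/-- The Yang-Baxter coboundary `d^n = Σ (-1)^i d_i^n`. -/
def dYB (op : Q → Q → Q) {n : ℕ} (f : (Fin n → Q) → (Fin n → Q) → A) :
    (Fin (n + 1) → Q) → (Fin (n + 1) → Q) → A := fun x y =>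
  ∑ i : Fin (n + 1), (-1 : A) ^ (i : ℕ) * dpart op i f x y

end

noncomputable section
variable {Λ : Type*} [AddCommGroup Λ]

/-- Partial Yang-Baxter coboundary with coefficients in an abelian group `Λ`. -/
def dpartG (op : Q → Q → Q) {n : ℕ} (i : Fin (n + 1))
    (f : (Fin n → Q) → (Fin n → Q) → Λ) :
    (Fin (n + 1) → Q) → (Fin (n + 1) → Q) → Λ := fun x y =>
  (if opChain op x i = opChain op y i then f (x ∘ i.succAbove) (y ∘ i.succAbove) else 0) -
    (if x i = y i then
      f (fun j => if i.succAbove j < i then op (x (i.succAbove j)) (x i) else x (i.succAbove j))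
        (fun j => if i.succAbove j < i then op (y (i.succAbove j)) (y i) else y (i.succAbove j))
     else 0)

/-- Yang-Baxter coboundary with coefficients in an abelian group `Λ`. -/
def dYBG (op : Q → Q → Q) {n : ℕ} (f : (Fin n → Q) → (Fin n → Q) → Λ) :
    (Fin (n + 1) → Q) → (Fin (n + 1) → Q) → Λ := fun x y =>
  ∑ i : Fin (n + 1), ((-1 : ℤ) ^ (i : ℕ)) • dpartG op i f x y

/-- The rack coboundary
`(δλ)(a_0,…,a_n) = Σ_{i=1}^n (−1)^i [λ(a_0,…,â_i,…,a_n) − λ(a_0^{a_i},…,a_{i-1}^{a_i},a_{i+1},…,a_n)]`. -/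
def rackd (op : Q → Q → Q) {n : ℕ} (lam : (Fin n → Q) → Λ) :
    (Fin (n + 1) → Q) → Λ := fun a =>
  ∑ i : Fin (n + 1), if i = 0 then 0 else
    ((-1 : ℤ) ^ (i : ℕ)) •
      (lam (a ∘ i.succAbove) -
        lam (fun j => if i.succAbove j < i then op (a (i.succAbove j)) (a i) else a (i.succAbove j)))

/-- A matrix is diagonal if its entries vanish whenever `x i ≠ y i` for some `i`. -/
def IsDiag {n : ℕ} (f : (Fin n → Q) → (Fin n → Q) → Λ) : Prop :=
  ∀ x y : Fin n → Q, (∃ i, x i ≠ y i) → f x y = 0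

/-- The face `(x_0^{x_i}, …, x_{i-1}^{x_i}, x_{i+1}, …, x_n)` shared by `dpartG` and `rackd`. -/
def actFace (op : Q → Q → Q) {n : ℕ} (i : Fin (n + 1)) (x : Fin (n + 1) → Q) : Fin n → Q :=
  fun j => if i.succAbove j < i then op (x (i.succAbove j)) (x i) else x (i.succAbove j)

theorem List.foldl_injective_of_injective_left {α β : Type*} (g : α → β → α)
    (hg : ∀ b, Function.Injective fun a => g a b) (l : List β) :
    Function.Injective fun a => l.foldl g a := by
  induction l with
  | nil => exact fun _ _ h => h
  | cons b l ih => exact fun _ _ h => hg b (ih h)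

theorem eq_of_opChain_eq {op : Q → Q → Q} (hop : ∀ b, Function.Injective fun a => op a b)
    {n : ℕ} {x y : Fin (n + 1) → Q} {i : Fin (n + 1)} (hlater : ∀ k, i < k → x k = y k)
    (hchain : opChain op x i = opChain op y i) : x i = y i := by
  let later := (List.finRange (n + 1)).filter fun j => i < j
  have hmap : later.map x = later.map y :=
    List.map_congr_left fun k hk => hlater k (by simpa using (List.mem_filter.mp hk).2)
  have hfold : (later.map x).foldl op (x i) = (later.map x).foldl op (y i) := by
    rw [List.foldl_map, hmap, List.foldl_map]
    exact hchain
  exact List.foldl_injective_of_injective_left op hop _ hfold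

theorem actFace_apply_ne {op : Q → Q → Q} (hop : ∀ b, Function.Injective fun a => op a b)
    {n : ℕ} {x y : Fin (n + 1) → Q} {i : Fin (n + 1)} (hi : x i = y i) {k : Fin n}
    (hk : x (i.succAbove k) ≠ y (i.succAbove k)) : actFace op i x k ≠ actFace op i y k := by
  unfold actFace
  split_ifs
  · rw [hi]
    exact fun h => hk (hop (y i) h)
  · exact hk

theorem actFace_zero (op : Q → Q → Q) {n : ℕ} (x : Fin (n + 1) → Q) :
    actFace op 0 x = x ∘ Fin.succAbove 0 :=
  funext fun _ => if_neg (Fin.not_lt_zero _)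

theorem dpartG_eq (op : Q → Q → Q) {n : ℕ} (i : Fin (n + 1))
    (f : (Fin n → Q) → (Fin n → Q) → Λ) (x y : Fin (n + 1) → Q) :
    dpartG op i f x y =
      (if opChain op x i = opChain op y i then f (x ∘ i.succAbove) (y ∘ i.succAbove) else 0) -
        if x i = y i then f (actFace op i x) (actFace op i y) else 0 :=
  rfl

theorem dpartG_self (op : Q → Q → Q) {n : ℕ} (i : Fin (n + 1))
    (f : (Fin n → Q) → (Fin n → Q) → Λ) (x : Fin (n + 1) → Q) :
    dpartG op i f x x =
      f (x ∘ i.succAbove) (x ∘ i.succAbove) - f (actFace op i x) (actFace op i x) := by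
  simp only [dpartG_eq, if_true]

theorem dpartG_zero_self (op : Q → Q → Q) {n : ℕ}
    (f : (Fin n → Q) → (Fin n → Q) → Λ) (x : Fin (n + 1) → Q) : dpartG op 0 f x x = 0 := by
  rw [dpartG_self, actFace_zero, sub_self]

theorem dYBG_self (op : Q → Q → Q) {n : ℕ} (f : (Fin n → Q) → (Fin n → Q) → Λ)
    (x : Fin (n + 1) → Q) : dYBG op f x x = rackd op (fun z => f z z) x := by
  refine Finset.sum_congr rfl fun i _ => ?_
  split_ifs with hi
  · rw [hi, dpartG_zero_self, smul_zero]
  · rw [dpartG_self]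
    rfl

/-- For `i = j` the first term vanishes since, by `eq_of_opChain_eq`, `x` and `y` then differ
after `j`; for `i ≠ j` both faces keep the discrepancy at `j`. -/
theorem dpartG_eq_zero_of_ne {op : Q → Q → Q} (hop : ∀ b, Function.Injective fun a => op a b)
    {n : ℕ} {f : (Fin n → Q) → (Fin n → Q) → Λ} (hf : IsDiag f) (i : Fin (n + 1))
    {x y : Fin (n + 1) → Q} {j : Fin (n + 1)} (hj : x j ≠ y j) : dpartG op i f x y = 0 := by
  rw [dpartG_eq]
  obtain rfl | hji := eq_or_ne j i
  · rw [if_neg hj, sub_zero, ite_eq_right_iff]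
    intro hchain
    refine hf _ _ (not_forall.mp fun hface => hj (eq_of_opChain_eq hop (fun k hk => ?_) hchain))
    obtain ⟨m, rfl⟩ := Fin.exists_succAbove_eq hk.ne'
    exact hface m
  · obtain ⟨k, rfl⟩ := Fin.exists_succAbove_eq hji
    have hface : f (x ∘ i.succAbove) (y ∘ i.succAbove) = 0 := hf _ _ ⟨k, hj⟩
    rw [hface, ite_self, zero_sub, neg_eq_zero, ite_eq_right_iff]
    exact fun hi => hf _ _ ⟨k, actFace_apply_ne hop hi hj⟩

theorem IsDiag.dYBG {op : Q → Q → Q} (hop : ∀ b, Function.Injective fun a => op a b) {n : ℕ}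
    {f : (Fin n → Q) → (Fin n → Q) → Λ} (hf : IsDiag f) : IsDiag (dYBG op f) := by
  rintro x y ⟨j, hj⟩
  exact Finset.sum_eq_zero fun i _ => by rw [dpartG_eq_zero_of_ne hop hf i hj, smul_zero]

/-- The diagonal subcomplex of the Yang-Baxter complex is isomorphic to the rack cochain
complex: for a diagonal cochain `f`, identified with `λ(x) = f[x,x]`, the Yang-Baxter
coboundary of `f` is again diagonal, and on the diagonal it equals the rack coboundary
of `λ`. -/
theorem diag_iso_rack (op : Q → Q → Q) (h : IsRack op) {n : ℕ}
    (f : (Fin n → Q) → (Fin n → Q) → Λ) (hf : IsDiag f) :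
    IsDiag (dYBG op f) ∧
      ∀ x : Fin (n + 1) → Q, dYBG op f x x = rackd op (fun z => f z z) x :=
  ⟨hf.dYBG fun b => (h.1 b).1, dYBG_self op f⟩

end
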